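/- Assume the normalization ‖m'‖_{L∞(0,1)} + ‖m''‖_{L∞(0,1)} + max_{[0,1]} c − min_{[0,1]} c ≤ 1/2. Let k* ≥ 2 be an integer, x₀ ∈ (0,1), and let a > 0 and R > 0 be such that (x₀ − 4R, x₀ + 4R) ⊂ (0,1) and m'(x)² ≥ a·|x − x₀|^{2(k*−1)} for every x ∈ (x₀ − 4R, x₀ + 4R). Then for every s ≥ 1, every principal eigenfunction w(s,·) as in the context, and every x with |x − x₀| < 2R, one has w(s,x) ≤ e^{1 − s^{1/2}·(|x − x₀| − (3/(a s))^{1/(2k*−2)})} · max_{|y − x₀| ≤ 2|x − x₀|} w(s,y). -/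

import Mathlib

open MeasureTheory Filter Set

/-- The Neumann principal eigenvalue of `-φ'' - 2 s m' φ' + c φ = λ φ` on `(0,1)`,
via its variational characterization. -/
noncomputable def lambdaN (m c : ℝ → ℝ) (s : ℝ) : ℝ :=
  sInf {l : ℝ | ∃ φ : ℝ → ℝ, ContDiff ℝ 1 φ ∧
    (∫ x in (0:ℝ)..1, Real.exp (2 * s * m x) * (φ x) ^ 2) = 1 ∧
    l = ∫ x in (0:ℝ)..1, Real.exp (2 * s * m x) * ((deriv φ x) ^ 2 + c x * (φ x) ^ 2)}

/-- `v` is a positive, `L²`-normalized principal eigenfunction (in the transformed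
variable `w = e^{s m} φ`) associated with the eigenvalue `lam` and parameter `s`. -/
def IsPrincipalEigenfunction (m c : ℝ → ℝ) (lam s : ℝ) (v : ℝ → ℝ) : Prop :=
  ContDiff ℝ 2 v ∧ (∀ x ∈ Set.Icc (0:ℝ) 1, 0 < v x) ∧
  (∀ x ∈ Set.Ioo (0:ℝ) 1,
    -(deriv (deriv v) x) + (s ^ 2 * (deriv m x) ^ 2 + s * deriv (deriv m) x + c x) * v x
      = lam * v x) ∧
  deriv v 0 = s * v 0 * deriv m 0 ∧ deriv v 1 = s * v 1 * deriv m 1 ∧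
  (∫ x in (0:ℝ)..1, (v x) ^ 2) = 1

/-!
Write `ε = (3/(a s))^{1/(2k*-2)}` and `r = |x - x₀|`. Where `|t - x₀| ≥ ε`, the potential
`s² m'² + s m'' + c - λ₁ᴺ(s)` is at least `s`: the first term is at least `3 s` by the degeneracy
bound, and the normalization controls the rest once `λ₁ᴺ(s) ≤ max c`, which follows by testing the
Rayleigh quotient with a constant. So `w'' ≥ s w` on the annulus `ε < |t - x₀| < 2 r`. On the
half of the annulus that contains `x`, the maximum principle compares `w` with the barrier
`M (e^{-√s (t - α)} + e^{√s (t - β)})`, `M` the maximum of `w` on `[x₀ - 2r, x₀ + 2r]`, which gives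
`w(x) ≤ 2 M e^{-√s (r - ε)} ≤ e^{1 - √s (r - ε)} M`.
-/

open Topology

theorem not_isLocalMax_of_deriv_deriv_pos {f : ℝ → ℝ} {x : ℝ} (hf : 0 < deriv (deriv f) x)
    (hc : ContinuousAt f x) : ¬ IsLocalMax f x := by
  intro hmax
  have hmin : IsLocalMin f x := isLocalMin_of_deriv_deriv_pos hf hmax.deriv_eq_zero hc
  have hconst : f =ᶠ[𝓝 x] fun _ => f x :=
    (hmin.and hmax).mono fun _ h => le_antisymm h.2 h.1
  have : deriv (deriv f) x = 0 := by
    rw [hconst.deriv.deriv_eq]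
    simp
  exact hf.ne' this

theorem nonpos_of_deriv_deriv_pos {u : ℝ → ℝ} {α β : ℝ} (hu : ContinuousOn u (Icc α β))
    (hpos : ∀ t ∈ Ioo α β, 0 < u t → 0 < deriv (deriv u) t) (hα : u α ≤ 0) (hβ : u β ≤ 0) :
    ∀ t ∈ Icc α β, u t ≤ 0 := by
  intro t ht
  by_contra! hut
  obtain ⟨y, hy, hmax⟩ := isCompact_Icc.exists_isMaxOn ⟨t, ht⟩ hu
  have huy : 0 < u y := hut.trans_le (hmax ht)
  have hyα : α < y := hy.1.lt_of_ne (by rintro rfl; linarith)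
  have hyβ : y < β := hy.2.lt_of_ne (by rintro rfl; linarith)
  have hnhds : Icc α β ∈ 𝓝 y := Icc_mem_nhds hyα hyβ
  exact not_isLocalMax_of_deriv_deriv_pos (hpos y ⟨hyα, hyβ⟩ huy) (hu.continuousAt hnhds)
    (hmax.isLocalMax hnhds)

theorem deriv_deriv_sub {f g : ℝ → ℝ} (hf : ContDiff ℝ 2 f) (hg : ContDiff ℝ 2 g) (x : ℝ) :
    deriv (deriv (f - g)) x = deriv (deriv f) x - deriv (deriv g) x := by
  have hd : deriv (f - g) = deriv f - deriv g :=
    funext fun y => deriv_sub (hf.differentiable two_ne_zero y) (hg.differentiable two_ne_zero y)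
  rw [hd]
  exact deriv_sub (hf.differentiable_deriv_two x) (hg.differentiable_deriv_two x)

theorem le_of_deriv_deriv_lt {w h : ℝ → ℝ} {α β : ℝ} (hw : ContDiff ℝ 2 w) (hh : ContDiff ℝ 2 h)
    (hlt : ∀ t ∈ Ioo α β, h t < w t → deriv (deriv h) t < deriv (deriv w) t)
    (hα : w α ≤ h α) (hβ : w β ≤ h β) : ∀ t ∈ Icc α β, w t ≤ h t := by
  intro t ht
  have := nonpos_of_deriv_deriv_pos (u := w - h) (hw.sub hh).continuous.continuousOn
    (fun t ht hwt => ?_) (sub_nonpos.2 hα) (sub_nonpos.2 hβ) t ht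
  · exact sub_nonpos.1 this
  · rw [deriv_deriv_sub hw hh, sub_pos]
    exact hlt t ht (sub_pos.1 hwt)

theorem hasDerivAt_exp_mul_sub (k a t : ℝ) :
    HasDerivAt (fun t => Real.exp (k * (t - a))) (k * Real.exp (k * (t - a))) t := by
  simpa [mul_comm] using (((hasDerivAt_id t).sub_const a).const_mul k).exp

theorem le_exp_add_exp_of_deriv_deriv_ge {w : ℝ → ℝ} {μ M α β : ℝ} (hw : ContDiff ℝ 2 w)
    (hμ : 0 < μ) (hM : 0 ≤ M)
    (hode : ∀ t ∈ Ioo α β, 0 < w t → μ ^ 2 * w t ≤ deriv (deriv w) t)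
    (hα : w α ≤ M) (hβ : w β ≤ M) :
    ∀ t ∈ Icc α β, w t ≤ M * (Real.exp (-μ * (t - α)) + Real.exp (μ * (t - β))) := by
  set b : ℝ → ℝ := fun t => M * (Real.exp (-μ * (t - α)) + Real.exp (μ * (t - β)))
  set b' : ℝ → ℝ := fun t => M * (-μ * Real.exp (-μ * (t - α)) + μ * Real.exp (μ * (t - β)))
  have hb : ∀ t, HasDerivAt b (b' t) t := fun t =>
    ((hasDerivAt_exp_mul_sub _ _ t).add (hasDerivAt_exp_mul_sub _ _ t)).const_mul M
  have hb' : ∀ t, HasDerivAt b' (μ ^ 2 * b t) t := fun t =>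
    ((((hasDerivAt_exp_mul_sub _ _ t).const_mul (-μ)).add
      ((hasDerivAt_exp_mul_sub _ _ t).const_mul μ)).const_mul M).congr_deriv (by ring)
  have hb'' : ∀ t, deriv (deriv b) t = μ ^ 2 * b t := fun t => by
    rw [show deriv b = b' from funext fun t => (hb t).deriv]
    exact (hb' t).deriv
  refine le_of_deriv_deriv_lt hw (by fun_prop) (fun t ht hbw => ?_) ?_ ?_
  · have hb0 : 0 ≤ b t := by positivity
    rw [hb'']
    exact (mul_lt_mul_of_pos_left hbw (by positivity)).trans_le (hode t ht (hb0.trans_lt hbw))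
  · have : 0 ≤ M * Real.exp (μ * (α - β)) := by positivity
    simp only [sub_self, mul_zero, Real.exp_zero]
    linarith
  · have : 0 ≤ M * Real.exp (-μ * (β - α)) := by positivity
    simp only [sub_self, mul_zero, Real.exp_zero]
    linarith

theorem le_two_mul_exp_of_deriv_deriv_ge {w : ℝ → ℝ} {μ M x₀ ε x : ℝ} (hw : ContDiff ℝ 2 w)
    (hμ : 0 < μ) (hM : 0 ≤ M) (hε : 0 ≤ ε) (hεx : ε < |x - x₀|)
    (hle : ∀ t ∈ Icc (x₀ - 2 * |x - x₀|) (x₀ + 2 * |x - x₀|), w t ≤ M)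
    (hode : ∀ t, ε < |t - x₀| → |t - x₀| < 2 * |x - x₀| → 0 < w t →
      μ ^ 2 * w t ≤ deriv (deriv w) t) :
    w x ≤ 2 * M * Real.exp (-μ * (|x - x₀| - ε)) := by
  set r := |x - x₀|
  have hsum : Real.exp (-μ * (r - ε)) + Real.exp (-μ * r) ≤ 2 * Real.exp (-μ * (r - ε)) := by
    have : Real.exp (-μ * r) ≤ Real.exp (-μ * (r - ε)) := Real.exp_le_exp.2 (by nlinarith)
    linarith
  have hbound : M * (Real.exp (-μ * (r - ε)) + Real.exp (-μ * r)) ≤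
      2 * M * Real.exp (-μ * (r - ε)) := by
    nlinarith
  rcases le_or_gt x₀ x with hx | hx
  · have hr : r = x - x₀ := abs_of_nonneg (sub_nonneg.2 hx)
    have hout := le_exp_add_exp_of_deriv_deriv_ge (α := x₀ + ε) (β := x₀ + 2 * r) hw hμ hM
      (fun t ht => hode t (by rw [abs_of_pos (by linarith [ht.1])]; linarith [ht.1])
        (by rw [abs_of_pos (by linarith [ht.1])]; linarith [ht.2]))
      (hle _ ⟨by linarith, by linarith⟩) (hle _ ⟨by linarith, by linarith⟩) x
      ⟨by linarith, by linarith⟩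
    calc w x ≤ _ := hout
      _ = M * (Real.exp (-μ * (r - ε)) + Real.exp (-μ * r)) := by rw [hr]; ring_nf
      _ ≤ _ := hbound
  · have hr : r = x₀ - x := (abs_of_neg (sub_neg.2 hx)).trans (neg_sub _ _)
    have hin := le_exp_add_exp_of_deriv_deriv_ge (α := x₀ - 2 * r) (β := x₀ - ε) hw hμ hM
      (fun t ht => hode t (by rw [abs_of_neg (by linarith [ht.2])]; linarith [ht.2])
        (by rw [abs_of_neg (by linarith [ht.2])]; linarith [ht.1]))
      (hle _ ⟨by linarith, by linarith⟩) (hle _ ⟨by linarith, by linarith⟩) x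
      ⟨by linarith, by linarith⟩
    calc w x ≤ _ := hin
      _ = M * (Real.exp (-μ * (r - ε)) + Real.exp (-μ * r)) := by rw [hr, add_comm]; ring_nf
      _ ≤ _ := hbound

theorem le_exp_one_sub_mul_of_deriv_deriv_ge {w : ℝ → ℝ} {μ M x₀ ε x : ℝ}
    (hw : ContDiff ℝ 2 w) (hμ : 0 < μ) (hM : 0 ≤ M) (hε : 0 ≤ ε)
    (hle : ∀ t ∈ Icc (x₀ - 2 * |x - x₀|) (x₀ + 2 * |x - x₀|), w t ≤ M)
    (hode : ∀ t, ε < |t - x₀| → |t - x₀| < 2 * |x - x₀| → 0 < w t →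
      μ ^ 2 * w t ≤ deriv (deriv w) t) :
    w x ≤ Real.exp (1 - μ * (|x - x₀| - ε)) * M := by
  set r := |x - x₀|
  rcases le_or_gt r ε with hrε | hεr
  · have hx : x ∈ Icc (x₀ - 2 * r) (x₀ + 2 * r) := by
      have := abs_le.1 (le_refl r)
      constructor <;> linarith
    exact (hle x hx).trans (le_mul_of_one_le_left hM (Real.one_le_exp (by nlinarith)))
  have h2e : 2 ≤ Real.exp 1 := by linarith [Real.add_one_le_exp 1]
  calc w x ≤ 2 * M * Real.exp (-μ * (r - ε)) :=
        le_two_mul_exp_of_deriv_deriv_ge hw hμ hM hε hεr hle hode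
    _ ≤ Real.exp 1 * Real.exp (-μ * (r - ε)) * M := by rw [mul_right_comm]; gcongr
    _ = _ := by rw [← Real.exp_add]; ring_nf

theorem lambdaN_le_sSup_image {m c : ℝ → ℝ} (hm : Continuous m) (hc : Continuous c) (s : ℝ) :
    lambdaN m c s ≤ sSup (c '' Icc 0 1) := by
  set ρ : ℝ → ℝ := fun x => Real.exp (2 * s * m x)
  have hρ : Continuous ρ := by fun_prop
  have hcS : ∀ x ∈ Icc (0:ℝ) 1, c x ≤ sSup (c '' Icc 0 1) := fun x hx =>
    le_csSup (isCompact_Icc.image hc).bddAbove (mem_image_of_mem c hx)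
  have hJc : ∀ x ∈ Icc (0:ℝ) 1, sInf (c '' Icc 0 1) ≤ c x := fun x hx =>
    csInf_le (isCompact_Icc.image hc).bddBelow (mem_image_of_mem c hx)
  set I := ∫ x in (0:ℝ)..1, ρ x
  have hI : 0 < I := intervalIntegral.intervalIntegral_pos_of_pos (hρ.intervalIntegrable 0 1)
    (fun x => Real.exp_pos _) one_pos
  have hsq : (Real.sqrt I)⁻¹ ^ 2 = I⁻¹ := by rw [inv_pow, Real.sq_sqrt hI.le]
  -- `sInf` of a set not bounded below is junk, so the bound `min c` on Rayleigh quotients is needed.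
  refine csInf_le_of_le ⟨sInf (c '' Icc 0 1), ?_⟩
    ⟨fun _ => (Real.sqrt I)⁻¹, contDiff_const, ?_, rfl⟩ ?_
  · rintro l ⟨φ, hφ, hφ1, rfl⟩
    calc sInf (c '' Icc 0 1) = ∫ x in (0:ℝ)..1, sInf (c '' Icc 0 1) * (ρ x * φ x ^ 2) := by
          rw [intervalIntegral.integral_const_mul, hφ1, mul_one]
      _ ≤ _ := intervalIntegral.integral_mono_on zero_le_one
            ((by fun_prop : Continuous _).intervalIntegrable _ _)
            ((by fun_prop : Continuous _).intervalIntegrable _ _)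
          fun x hx => by
            have := mul_le_mul_of_nonneg_right (hJc x hx) (by positivity : 0 ≤ ρ x * φ x ^ 2)
            nlinarith [Real.exp_pos (2 * s * m x), sq_nonneg (deriv φ x)]
  · simp only
    rw [intervalIntegral.integral_mul_const, hsq, mul_inv_cancel₀ hI.ne']
  · simp only [deriv_const', hsq]
    calc _ ≤ ∫ x in (0:ℝ)..1, sSup (c '' Icc 0 1) * I⁻¹ * ρ x :=
          intervalIntegral.integral_mono_on zero_le_one
            ((by fun_prop : Continuous _).intervalIntegrable _ _)
            ((by fun_prop : Continuous _).intervalIntegrable _ _)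
            fun x hx => by
              have := mul_le_mul_of_nonneg_right (hcS x hx) (by positivity : 0 ≤ I⁻¹ * ρ x)
              nlinarith
      _ = _ := by
        rw [intervalIntegral.integral_const_mul, mul_assoc, inv_mul_cancel₀ hI.ne', mul_one]

theorem le_pow_of_rpow_one_div_le {q d : ℝ} {k : ℕ} (hk : 2 ≤ k) (hq : 0 ≤ q)
    (hd : q ^ ((1:ℝ) / (2 * k - 2)) ≤ d) : q ≤ d ^ (2 * (k - 1)) := by
  have hn : 2 * (k - 1) ≠ 0 := by omega
  have hexp : (1:ℝ) / (2 * k - 2) = ((2 * (k - 1) : ℕ) : ℝ)⁻¹ := by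
    rw [one_div, Nat.cast_mul, Nat.cast_sub (by omega)]
    push_cast
    ring
  rw [hexp] at hd
  calc q = (q ^ ((2 * (k - 1) : ℕ) : ℝ)⁻¹) ^ (2 * (k - 1)) :=
        (Real.rpow_inv_natCast_pow hq hn).symm
    _ ≤ d ^ (2 * (k - 1)) := pow_le_pow_left₀ (by positivity) hd _

theorem le_potential_sub_lambdaN {m c : ℝ → ℝ} (hm : ContDiff ℝ 2 m) (hc : Continuous c)
    (hnorm : sSup ((fun x => |deriv m x|) '' Icc (0:ℝ) 1) +
             sSup ((fun x => |deriv (deriv m) x|) '' Icc (0:ℝ) 1) +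
             (sSup (c '' Icc (0:ℝ) 1) - sInf (c '' Icc (0:ℝ) 1)) ≤ 1/2)
    {s t : ℝ} (hs : 1 ≤ s) (ht : t ∈ Icc (0:ℝ) 1) (hm't : 3 / s ≤ deriv m t ^ 2) :
    s ≤ s ^ 2 * deriv m t ^ 2 + s * deriv (deriv m) t + c t - lambdaN m c s := by
  have hm'' : Continuous (deriv (deriv m)) := (hm.deriv' (n := 1)).continuous_deriv le_rfl
  have hA : 0 ≤ sSup ((fun x => |deriv m x|) '' Icc (0:ℝ) 1) :=
    Real.sSup_nonneg (by rintro _ ⟨_, _, rfl⟩; exact abs_nonneg _)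
  have hB : |deriv (deriv m) t| ≤ sSup ((fun x => |deriv (deriv m) x|) '' Icc (0:ℝ) 1) :=
    le_csSup (isCompact_Icc.image hm''.abs).bddAbove (mem_image_of_mem _ ht)
  have hS : c t ≤ sSup (c '' Icc 0 1) :=
    le_csSup (isCompact_Icc.image hc).bddAbove (mem_image_of_mem c ht)
  have hJ : sInf (c '' Icc 0 1) ≤ c t :=
    csInf_le (isCompact_Icc.image hc).bddBelow (mem_image_of_mem c ht)
  have hlam := lambdaN_le_sSup_image hm.continuous hc s
  have h3s : 3 * s ≤ s ^ 2 * deriv m t ^ 2 := by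
    have := mul_le_mul_of_nonneg_left hm't (by positivity : 0 ≤ s ^ 2)
    rwa [show s ^ 2 * (3 / s) = 3 * s by field_simp] at this
  have hm''t : -(s / 2) ≤ s * deriv (deriv m) t := by
    have := neg_abs_le (deriv (deriv m) t)
    nlinarith
  linarith [abs_nonneg (deriv (deriv m) t)]

theorem mul_le_deriv_deriv_of_isPrincipalEigenfunction {m c v : ℝ → ℝ} (hm : ContDiff ℝ 2 m)
    (hc : Continuous c)
    (hnorm : sSup ((fun x => |deriv m x|) '' Icc (0:ℝ) 1) +
             sSup ((fun x => |deriv (deriv m) x|) '' Icc (0:ℝ) 1) +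
             (sSup (c '' Icc (0:ℝ) 1) - sInf (c '' Icc (0:ℝ) 1)) ≤ 1/2)
    {s t : ℝ} (hs : 1 ≤ s) (hv : IsPrincipalEigenfunction m c (lambdaN m c s) s v)
    (ht : t ∈ Ioo (0:ℝ) 1) (hm't : 3 / s ≤ deriv m t ^ 2) :
    s * v t ≤ deriv (deriv v) t := by
  obtain ⟨-, hvpos, hode, -⟩ := hv
  have hpot := le_potential_sub_lambdaN hm hc hnorm hs (Ioo_subset_Icc_self ht) hm't
  nlinarith [hode t ht, mul_le_mul_of_nonneg_right hpot (hvpos t (Ioo_subset_Icc_self ht)).le]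

theorem eigenfunction_pointwise_decay_estimate
    (m c : ℝ → ℝ) (hm : ContDiff ℝ 2 m) (hc : Continuous c)
    (hnorm : sSup ((fun x => |deriv m x|) '' Set.Icc (0:ℝ) 1) +
             sSup ((fun x => |deriv (deriv m) x|) '' Set.Icc (0:ℝ) 1) +
             (sSup (c '' Set.Icc (0:ℝ) 1) - sInf (c '' Set.Icc (0:ℝ) 1)) ≤ 1/2)
    (kstar : ℕ) (hk : 2 ≤ kstar)
    (x₀ a R : ℝ) (ha : 0 < a)
    (hsub : Set.Ioo (x₀ - 4*R) (x₀ + 4*R) ⊆ Set.Ioo (0:ℝ) 1)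
    (hlow : ∀ x ∈ Set.Ioo (x₀ - 4*R) (x₀ + 4*R),
      a * |x - x₀| ^ (2 * (kstar - 1)) ≤ (deriv m x) ^ 2) :
    ∀ s ≥ (1:ℝ), ∀ v : ℝ → ℝ,
      IsPrincipalEigenfunction m c (lambdaN m c s) s v →
      ∀ x : ℝ, |x - x₀| < 2 * R →
        v x ≤ Real.exp (1 - Real.sqrt s *
            (|x - x₀| - (3 / (a * s)) ^ ((1:ℝ) / (2 * (kstar:ℝ) - 2)))) *
          sSup (v '' Set.Icc (x₀ - 2 * |x - x₀|) (x₀ + 2 * |x - x₀|)) := by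
  intro s hs v hv x hx
  set r := |x - x₀|
  set M := sSup (v '' Icc (x₀ - 2 * r) (x₀ + 2 * r))
  have hband : Icc (x₀ - 2 * r) (x₀ + 2 * r) ⊆ Ioo 0 1 := fun t ht =>
    hsub ⟨by linarith [ht.1], by linarith [ht.2]⟩
  have hvM : ∀ t ∈ Icc (x₀ - 2 * r) (x₀ + 2 * r), v t ≤ M := fun t ht =>
    le_csSup (isCompact_Icc.image hv.1.continuous).bddAbove (mem_image_of_mem v ht)
  have hcenter : x₀ ∈ Icc (x₀ - 2 * r) (x₀ + 2 * r) := by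
    have := abs_nonneg (x - x₀)
    constructor <;> linarith
  have hM : 0 ≤ M := (hv.2.1 x₀ (Ioo_subset_Icc_self (hband hcenter))).le.trans (hvM x₀ hcenter)
  refine le_exp_one_sub_mul_of_deriv_deriv_ge hv.1 (Real.sqrt_pos.2 (by linarith)) hM
    (by positivity) hvM fun t hεt htr _ => ?_
  have ht : t ∈ Ioo (x₀ - 4 * R) (x₀ + 4 * R) := by
    have := abs_sub_lt_iff.1 (htr.trans (by linarith) : |t - x₀| < 4 * R)
    constructor <;> linarith
  have hm't : 3 / s ≤ deriv m t ^ 2 := calc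
    3 / s = a * (3 / (a * s)) := by field_simp
    _ ≤ a * |t - x₀| ^ (2 * (kstar - 1)) :=
      mul_le_mul_of_nonneg_left (le_pow_of_rpow_one_div_le hk (by positivity) hεt.le) ha.le
    _ ≤ _ := hlow t ht
  rw [Real.sq_sqrt (by linarith)]
  exact mul_le_deriv_deriv_of_isPrincipalEigenfunction hm hc hnorm hs hv (hsub ht) hm't
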